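/- Edge-disjoint path pairs to two target vertices in 3-connected graphs (Remark 4.12, claims (1) and (2)). Let G be a finite connected simple graph and let s₁, s₂, s₃ ∈ V(G) be three distinct vertices such that G is 3-connected to {s₁,s₂,s₃}. Then: (1) for any two distinct vertices x, y ∈ V(G) ∖ {s₁,s₂,s₃}, there exist two edge-disjoint paths in G, one starting at x and the other starting at y, such that one of them ends at s₁ and the other ends at s₃; (2) for any x ∈ V(G) ∖ {s₂}, there exist two edge-disjoint paths in G, one starting at x and the other starting at s₂, such that one of them ends at s₁ and the other ends at s₃. -/

import Mathlib

open scoped Classical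

/-- A finite multigraph on a vertex type `V`: a finite vertex set together with
an edge-multiplicity function on unordered pairs, supported on pairs of vertices. -/
structure Multigraph (V : Type) where
  verts : Finset V
  mult : Sym2 V → ℕ
  supp : ∀ e : Sym2 V, mult e ≠ 0 → ∀ v ∈ e, v ∈ verts

namespace Multigraph

variable {V : Type}

/-- The multiset of neighbours of `x`, counted with edge multiplicity. -/
def nbrs (G : Multigraph V) (x : V) : Multiset V :=
  G.verts.val.bind fun u => Multiset.replicate (G.mult s(x, u)) u

/-- The (edge-)degree of a vertex: the number of edges incident to it. -/
def deg (G : Multigraph V) (x : V) : ℕ := (G.nbrs x).card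

/-- Adjacency: `a ≠ b` and at least one edge joins `a` and `b`. -/
def Adj (G : Multigraph V) (a b : V) : Prop := a ≠ b ∧ G.mult s(a, b) ≠ 0

/-- A multigraph is simple if all multiplicities are at most one and there
are no self-loops. -/
def IsSimple (G : Multigraph V) : Prop :=
  (∀ e : Sym2 V, G.mult e ≤ 1) ∧ ∀ v : V, G.mult s(v, v) = 0

/-- Connectivity of a multigraph. -/
def Connected (G : Multigraph V) : Prop :=
  G.verts.Nonempty ∧ ∀ u ∈ G.verts, ∀ v ∈ G.verts, Relation.ReflTransGen G.Adj u v

/-- The number of edges (counted with multiplicity). -/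
def numEdges (G : Multigraph V) : ℕ := ∑ e ∈ G.verts.sym2, G.mult e

end Multigraph

/-- The list of (unordered) edges traversed by a list of vertices. -/
def listEdges {V : Type} (l : List V) : List (Sym2 V) :=
  (l.zip l.tail).map fun p => s(p.1, p.2)

namespace Multigraph

variable {V : Type}

/-- `l` is a (simple) path in `G`: a nonempty list of distinct vertices of `G`
in which consecutive vertices are adjacent. -/
def IsPathList (G : Multigraph V) (l : List V) : Prop :=
  l ≠ [] ∧ l.Nodup ∧ (∀ v ∈ l, v ∈ G.verts) ∧ l.Chain' G.Adj

/-- `l` is a simple path in `G` from `a` to `b`. -/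
def IsPathBetween (G : Multigraph V) (a b : V) (l : List V) : Prop :=
  G.IsPathList l ∧ l.head? = some a ∧ l.getLast? = some b

/-- `x` is 3-connected to `{s₁, s₂, s₃}`: there are three pairwise edge-disjoint
paths from `x` to `s₁`, `s₂` and `s₃` respectively. -/
def ThreeConnFrom (G : Multigraph V) (s₁ s₂ s₃ x : V) : Prop :=
  ∃ l₁ l₂ l₃ : List V,
    G.IsPathBetween x s₁ l₁ ∧ G.IsPathBetween x s₂ l₂ ∧ G.IsPathBetween x s₃ l₃ ∧
    (listEdges l₁).Disjoint (listEdges l₂) ∧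
    (listEdges l₁).Disjoint (listEdges l₃) ∧
    (listEdges l₂).Disjoint (listEdges l₃)

/-- `G` is 3-connected to `{s₁, s₂, s₃}`: every vertex outside `{s₁, s₂, s₃}`
is 3-connected to `{s₁, s₂, s₃}`. -/
def ThreeConnTo (G : Multigraph V) (s₁ s₂ s₃ : V) : Prop :=
  ∀ x ∈ G.verts, x ≠ s₁ → x ≠ s₂ → x ≠ s₃ → G.ThreeConnFrom s₁ s₂ s₃ x

/-- The edge `{x, y}` is H-reducible: `x` and `y` both have degree at least 3
and are joined by exactly one edge. -/
def HReducible (G : Multigraph V) (x y : V) : Prop :=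
  x ∈ G.verts ∧ y ∈ G.verts ∧ x ≠ y ∧ G.mult s(x, y) = 1 ∧
    3 ≤ G.deg x ∧ 3 ≤ G.deg y

/-- `G'` is the H-reduction of `G` by the H-reducible edge `{x, y}`:
if `x` (resp. `y`) has degree `3` it is deleted and its two remaining
neighbours get joined by a new edge `e_{x∖y}` (resp. `e_{y∖x}`); a vertex of
degree at least `4` is kept; if both have degree at least `4`, only the edge
`{x, y}` is deleted. -/
def IsHReductionBy (G : Multigraph V) (x y : V) (G' : Multigraph V) : Prop :=
  G.HReducible x y ∧
    ((G.deg x = 3 ∧ G.deg y = 3 ∧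
        ∃ z₁ z₂ t₁ t₂ : V,
          G.nbrs x = {y, z₁, z₂} ∧ G.nbrs y = {x, t₁, t₂} ∧
          (∀ v : V, v ∈ G'.verts ↔ v ∈ G.verts ∧ v ≠ x ∧ v ≠ y) ∧
          ∀ e : Sym2 V, G'.mult e =
            (if x ∈ e ∨ y ∈ e then 0 else G.mult e)
              + (if e = s(z₁, z₂) then 1 else 0)
              + (if e = s(t₁, t₂) then 1 else 0)) ∨
     (G.deg x = 3 ∧ 4 ≤ G.deg y ∧
        ∃ z₁ z₂ : V, G.nbrs x = {y, z₁, z₂} ∧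
          (∀ v : V, v ∈ G'.verts ↔ v ∈ G.verts ∧ v ≠ x) ∧
          ∀ e : Sym2 V, G'.mult e =
            (if x ∈ e then 0 else G.mult e) + (if e = s(z₁, z₂) then 1 else 0)) ∨
     (G.deg y = 3 ∧ 4 ≤ G.deg x ∧
        ∃ t₁ t₂ : V, G.nbrs y = {x, t₁, t₂} ∧
          (∀ v : V, v ∈ G'.verts ↔ v ∈ G.verts ∧ v ≠ y) ∧
          ∀ e : Sym2 V, G'.mult e =
            (if y ∈ e then 0 else G.mult e) + (if e = s(t₁, t₂) then 1 else 0)) ∨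
     (4 ≤ G.deg x ∧ 4 ≤ G.deg y ∧
        (∀ v : V, v ∈ G'.verts ↔ v ∈ G.verts) ∧
        ∀ e : Sym2 V, G'.mult e = if e = s(x, y) then 0 else G.mult e))

end Multigraph

/-!
The two paths need only be edge-disjoint, so they may share vertices. Let `P` and `Q` be
edge-disjoint paths from `x` to `a` and to `b`, and let `w` be the first vertex on `P ∪ Q` of a
path from `z` to `a`. The segment from `z` to `w` uses no edge of `P` or `Q`, since each of its
edges has an endpoint off `P ∪ Q`. If `w` lies on `P`, continue along `P` to `a` and pair the
result with `Q`; otherwise continue along `Q` to `b` and pair it with `P`. In claim (2) with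
`x ∈ {s₁, s₃}` one of `P`, `Q` is the one-vertex path.
-/

theorem List.exists_split_at_first {α : Type*} {p : α → Prop} {l : List α} (h : ∃ a ∈ l, p a) :
    ∃ as b bs, l = as ++ b :: bs ∧ p b ∧ ∀ a ∈ as, ¬ p a := by
  obtain ⟨b, hb⟩ := Option.isSome_iff_exists.1
    (List.find?_isSome (p := fun a => decide (p a)) |>.2 (by simpa using h))
  obtain ⟨hpb, as, bs, rfl, has⟩ := List.find?_eq_some_iff_append.1 hb
  exact ⟨as, b, bs, rfl, by simpa using hpb, fun a ha => by simpa using has a ha⟩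

theorem listEdges_cons_cons {V : Type} (a b : V) (l : List V) :
    listEdges (a :: b :: l) = s(a, b) :: listEdges (b :: l) := rfl

theorem listEdges_append_cons {V : Type} (l s : List V) (w : V) :
    listEdges (l ++ w :: s) = listEdges (l ++ [w]) ++ listEdges (w :: s) := by
  induction l with
  | nil => rfl
  | cons a l ih =>
    cases l with
    | nil => rfl
    | cons b l =>
      simp only [List.cons_append, listEdges_cons_cons] at ih ⊢
      rw [ih]

theorem mem_of_mem_listEdges {V : Type} {l : List V} {e : Sym2 V} (he : e ∈ listEdges l) {v : V}
    (hv : v ∈ e) : v ∈ l := by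
  obtain ⟨⟨a, b⟩, hab, rfl⟩ := List.mem_map.1 he
  rcases Sym2.mem_iff.1 hv with rfl | rfl
  · exact (List.of_mem_zip hab).1
  · exact List.mem_of_mem_tail (List.of_mem_zip hab).2

theorem exists_mem_of_mem_listEdges_append_singleton {V : Type} {l : List V} {w : V}
    {e : Sym2 V} (he : e ∈ listEdges (l ++ [w])) : ∃ u ∈ l, u ∈ e := by
  induction l with
  | nil => simp [listEdges] at he
  | cons a l ih =>
    cases l with
    | nil => exact ⟨a, List.mem_singleton_self a, by simp_all [listEdges]⟩
    | cons b l =>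
      rw [List.cons_append, List.cons_append, listEdges_cons_cons, List.mem_cons] at he
      rcases he with rfl | he
      · exact ⟨a, List.mem_cons_self, Sym2.mem_mk_left a b⟩
      · obtain ⟨u, hu, hue⟩ := ih he
        exact ⟨u, List.mem_cons_of_mem a hu, hue⟩

namespace Multigraph

variable {V : Type} {G : Multigraph V}

theorem mem_verts_of_adj {a b : V} (h : G.Adj a b) : b ∈ G.verts :=
  G.supp _ h.2 b (Sym2.mem_mk_right a b)

theorem isPathBetween_singleton {x : V} (hx : x ∈ G.verts) : G.IsPathBetween x x [x] :=
  ⟨⟨List.cons_ne_nil x [], List.nodup_singleton x, by simpa using hx, List.isChain_singleton x⟩,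
    rfl, rfl⟩

theorem IsPathList.infix {l l' : List V} (h : G.IsPathList l) (hl' : l' <:+: l) (hne : l' ≠ []) :
    G.IsPathList l' :=
  ⟨hne, h.2.1.sublist hl'.sublist, fun v hv => h.2.2.1 v (hl'.subset hv), h.2.2.2.infix hl'⟩

theorem IsPathBetween.prefix {z c w : V} {pre post : List V}
    (h : G.IsPathBetween z c (pre ++ w :: post)) : G.IsPathBetween z w (pre ++ [w]) := by
  refine ⟨h.1.infix ?_ (by simp), ?_, by simp⟩
  · simpa using (List.prefix_append (pre ++ [w]) post).isInfix
  · cases pre <;> exact h.2.1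

theorem IsPathBetween.suffix {x a w : V} {p s : List V}
    (h : G.IsPathBetween x a (p ++ w :: s)) : G.IsPathBetween w a (w :: s) :=
  ⟨h.1.infix (List.suffix_append p _).isInfix (List.cons_ne_nil w s), rfl,
    by rw [← h.2.2, List.getLast?_append_cons]⟩

theorem IsPathBetween.append {u w v : V} {l s : List V} (h₁ : G.IsPathBetween u w (l ++ [w]))
    (h₂ : G.IsPathBetween w v (w :: s)) (hdisj : ∀ y ∈ l, y ∉ w :: s) :
    G.IsPathBetween u v (l ++ w :: s) := by
  obtain ⟨⟨-, hnd₁, hverts₁, hch₁⟩, hhead, -⟩ := h₁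
  obtain ⟨⟨-, hnd₂, hverts₂, hch₂⟩, -, hlast⟩ := h₂
  refine ⟨⟨by simp, ?_, ?_, ?_⟩, by simpa [List.head?_append] using hhead,
    by rwa [List.getLast?_append_cons]⟩
  · exact List.nodup_append.2 ⟨hnd₁.sublist (List.sublist_append_left l [w]), hnd₂,
      fun a ha b hb hab => hdisj a ha (hab ▸ hb)⟩
  · intro y hy
    rcases List.mem_append.1 hy with hy | hy
    · exact hverts₁ y (List.mem_append_left _ hy)
    · exact hverts₂ y hy
  · have hch : List.IsChain G.Adj (l ++ [w] ++ s) := hch₁.append_overlap hch₂ (List.cons_ne_nil w [])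
    rwa [List.append_assoc, List.singleton_append] at hch

/-- The underlying simple graph; `SimpleGraph.Walk.bypass` turns `Connected` into paths. -/
def adjGraph (G : Multigraph V) : SimpleGraph V where
  Adj := G.Adj
  symm := ⟨fun _ _ h => ⟨h.1.symm, by rw [Sym2.eq_swap]; exact h.2⟩⟩
  loopless := ⟨fun _ h => h.1 rfl⟩

theorem mem_verts_of_mem_support {u v w : V} (p : G.adjGraph.Walk u v) (hu : u ∈ G.verts)
    (hw : w ∈ p.support) : w ∈ G.verts := by
  induction p with
  | nil => exact (List.mem_singleton.1 hw) ▸ hu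
  | cons h p ih =>
    rcases List.mem_cons.1 hw with rfl | hw
    · exact hu
    · exact ih (mem_verts_of_adj h) hw

theorem isPathBetween_support {u v : V} {p : G.adjGraph.Walk u v} (hp : p.IsPath)
    (hu : u ∈ G.verts) : G.IsPathBetween u v p.support :=
  ⟨⟨p.support_ne_nil, hp.support_nodup, fun _ => mem_verts_of_mem_support p hu,
      p.isChain_adj_support⟩,
    by rw [← p.cons_tail_support]; rfl,
    by rw [List.getLast?_eq_some_getLast p.support_ne_nil, p.getLast_support]⟩

theorem Connected.exists_isPathBetween (hG : G.Connected) {u v : V} (hu : u ∈ G.verts)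
    (hv : v ∈ G.verts) : ∃ l, G.IsPathBetween u v l := by
  obtain ⟨p⟩ : G.adjGraph.Reachable u v :=
    (SimpleGraph.reachable_iff_reflTransGen u v).2 (hG.2 u hu v hv)
  exact ⟨_, isPathBetween_support p.bypass_isPath hu⟩

theorem exists_isPathBetween_disjoint_of_join {x z w a : V} {pre P Q : List V}
    (hr : G.IsPathBetween z w (pre ++ [w])) (hP : G.IsPathBetween x a P) (hw : w ∈ P)
    (hpre : ∀ v ∈ pre, v ∉ P ∧ v ∉ Q) (hPQ : (listEdges P).Disjoint (listEdges Q)) :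
    ∃ l, G.IsPathBetween z a l ∧ (listEdges l).Disjoint (listEdges Q) := by
  obtain ⟨p, s, rfl⟩ := List.append_of_mem hw
  have hpath : G.IsPathBetween z a (pre ++ w :: s) :=
    hr.append hP.suffix fun v hv hvs => (hpre v hv).1 (List.mem_append_right p hvs)
  have hjoin : (listEdges (pre ++ [w])).Disjoint (listEdges Q) := fun e hre hQe => by
    obtain ⟨u, hu, hue⟩ := exists_mem_of_mem_listEdges_append_singleton hre
    exact (hpre u hu).2 (mem_of_mem_listEdges hQe hue)
  have hrest : (listEdges (w :: s)).Disjoint (listEdges Q) := fun e hse hQe =>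
    hPQ (by rw [listEdges_append_cons]; exact List.mem_append_right _ hse) hQe
  refine ⟨pre ++ w :: s, hpath, ?_⟩
  rw [listEdges_append_cons, List.disjoint_append_left]
  exact ⟨hjoin, hrest⟩

theorem Connected.exists_edgeDisjoint_paths_of_fork (hG : G.Connected) {x z a b : V}
    {P Q : List V} (hz : z ∈ G.verts) (hP : G.IsPathBetween x a P) (hQ : G.IsPathBetween x b Q)
    (hPQ : (listEdges P).Disjoint (listEdges Q)) :
    ∃ l₁ l₂ : List V, (listEdges l₁).Disjoint (listEdges l₂) ∧
      ((G.IsPathBetween x a l₁ ∧ G.IsPathBetween z b l₂) ∨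
       (G.IsPathBetween x b l₁ ∧ G.IsPathBetween z a l₂)) := by
  have ha : a ∈ P := List.mem_of_getLast? hP.2.2
  obtain ⟨q, hq⟩ := hG.exists_isPathBetween hz (hP.1.2.2.1 a ha)
  obtain ⟨pre, w, post, rfl, hw, hpre⟩ := List.exists_split_at_first (p := fun v => v ∈ P ∨ v ∈ Q)
    ⟨a, List.mem_of_getLast? hq.2.2, .inl ha⟩
  have hpre' : ∀ v ∈ pre, v ∉ P ∧ v ∉ Q := fun v hv => not_or.1 (hpre v hv)
  rcases hw with hwP | hwQ
  · obtain ⟨l, hl, hlQ⟩ := exists_isPathBetween_disjoint_of_join hq.prefix hP hwP hpre' hPQ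
    exact ⟨Q, l, hlQ.symm, .inr ⟨hQ, hl⟩⟩
  · obtain ⟨l, hl, hlP⟩ := exists_isPathBetween_disjoint_of_join hq.prefix hQ hwQ
      (fun v hv => (hpre' v hv).symm) hPQ.symm
    exact ⟨P, l, hlP.symm, .inl ⟨hP, hl⟩⟩

end Multigraph

theorem edge_disjoint_path_pairs_general
    {V : Type} (G : Multigraph V) (s₁ s₂ s₃ : V)
    (hs₁ : s₁ ∈ G.verts) (hs₂ : s₂ ∈ G.verts) (hs₃ : s₃ ∈ G.verts)
    (hconn : G.Connected)
    (h3c : G.ThreeConnTo s₁ s₂ s₃) :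
    -- (1)
    (∀ x y : V, x ∈ G.verts → y ∈ G.verts → x ≠ y →
      x ≠ s₁ → x ≠ s₂ → x ≠ s₃ → y ≠ s₁ → y ≠ s₂ → y ≠ s₃ →
      ∃ l₁ l₂ : List V, (listEdges l₁).Disjoint (listEdges l₂) ∧
        ((G.IsPathBetween x s₁ l₁ ∧ G.IsPathBetween y s₃ l₂) ∨
         (G.IsPathBetween x s₃ l₁ ∧ G.IsPathBetween y s₁ l₂))) ∧
    -- (2)
    (∀ x : V, x ∈ G.verts → x ≠ s₂ →
      ∃ l₁ l₂ : List V, (listEdges l₁).Disjoint (listEdges l₂) ∧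
        ((G.IsPathBetween x s₁ l₁ ∧ G.IsPathBetween s₂ s₃ l₂) ∨
         (G.IsPathBetween x s₃ l₁ ∧ G.IsPathBetween s₂ s₁ l₂))) := by
  refine ⟨fun x y hx hy _ hx₁ hx₂ hx₃ _ _ _ => ?_, fun x hx hx₂ => ?_⟩
  · obtain ⟨P, -, Q, hP, -, hQ, -, hPQ, -⟩ := h3c x hx hx₁ hx₂ hx₃
    exact hconn.exists_edgeDisjoint_paths_of_fork hy hP hQ hPQ
  by_cases hx₁ : x = s₁
  · subst hx₁
    obtain ⟨Q, hQ⟩ := hconn.exists_isPathBetween hx hs₃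
    exact hconn.exists_edgeDisjoint_paths_of_fork hs₂ (Multigraph.isPathBetween_singleton hx) hQ
      (List.disjoint_nil_left _)
  by_cases hx₃ : x = s₃
  · subst hx₃
    obtain ⟨P, hP⟩ := hconn.exists_isPathBetween hx hs₁
    exact hconn.exists_edgeDisjoint_paths_of_fork hs₂ hP (Multigraph.isPathBetween_singleton hx)
      (List.disjoint_nil_right _)
  obtain ⟨P, -, Q, hP, -, hQ, -, hPQ, -⟩ := h3c x hx hx₁ hx₂ hx₃
  exact hconn.exists_edgeDisjoint_paths_of_fork hs₂ hP hQ hPQ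

/-- **Edge-disjoint path pairs to two target vertices in 3-connected graphs**
(Remark 4.12, claims (1) and (2)).
If `G` is a finite connected simple graph 3-connected to the distinct vertices
`s₁, s₂, s₃`, then (1) any two distinct vertices `x, y` outside `{s₁, s₂, s₃}` admit
two edge-disjoint paths, starting at `x` and `y` respectively, one ending at `s₁`
and the other at `s₃`; and (2) the same holds for paths starting at any `x ≠ s₂`
and at `s₂`. -/
theorem edge_disjoint_path_pairs
    {V : Type} (G : Multigraph V) (s₁ s₂ s₃ : V)
    (h12 : s₁ ≠ s₂) (h13 : s₁ ≠ s₃) (h23 : s₂ ≠ s₃)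
    (hs₁ : s₁ ∈ G.verts) (hs₂ : s₂ ∈ G.verts) (hs₃ : s₃ ∈ G.verts)
    (hsimple : G.IsSimple) (hconn : G.Connected)
    (h3c : G.ThreeConnTo s₁ s₂ s₃) :
    -- (1)
    (∀ x y : V, x ∈ G.verts → y ∈ G.verts → x ≠ y →
      x ≠ s₁ → x ≠ s₂ → x ≠ s₃ → y ≠ s₁ → y ≠ s₂ → y ≠ s₃ →
      ∃ l₁ l₂ : List V, (listEdges l₁).Disjoint (listEdges l₂) ∧
        ((G.IsPathBetween x s₁ l₁ ∧ G.IsPathBetween y s₃ l₂) ∨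
         (G.IsPathBetween x s₃ l₁ ∧ G.IsPathBetween y s₁ l₂))) ∧
    -- (2)
    (∀ x : V, x ∈ G.verts → x ≠ s₂ →
      ∃ l₁ l₂ : List V, (listEdges l₁).Disjoint (listEdges l₂) ∧
        ((G.IsPathBetween x s₁ l₁ ∧ G.IsPathBetween s₂ s₃ l₂) ∨
         (G.IsPathBetween x s₃ l₁ ∧ G.IsPathBetween s₂ s₁ l₂))) :=
  edge_disjoint_path_pairs_general G s₁ s₂ s₃ hs₁ hs₂ hs₃ hconn h3c
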